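/- Let B₁ = x³ ∗ˣ (x³y⁴), A₁ = x³ ∗ˣ (x²y³), C₁ = x³ ∗ˣ (x⁴y⁵). Then the discriminant D₁ = B₁² − A₁ C₁ equals −(1/117600) x¹⁴ y⁸; in particular D₁(x,y) < 0 for all x ≠ 0 and y ≠ 0, so the equation A₁ u_xx + B₁ u_xy + C₁ u_yy = 0 is elliptic at all such points. -/
import Mathlib

lemma intpow (a b : ℝ) (k : ℕ) : IntervalIntegrable (fun θ : ℝ => a * θ ^ k) MeasureTheory.volume 0 b :=
  (intervalIntegral.intervalIntegrable_pow k).const_mul a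

lemma key (x : ℝ) (n : ℕ) :
    (∫ θ in (0:ℝ)..x, (x - θ) ^ 3 * θ ^ n) =
      x ^ 3 * (x ^ (n + 1) / (n + 1)) - 3 * x ^ 2 * (x ^ (n + 2) / (n + 2)) +
        3 * x * (x ^ (n + 3) / (n + 3)) - x ^ (n + 4) / (n + 4) := by
  have h : ∀ θ ∈ Set.uIcc (0:ℝ) x, (x - θ) ^ 3 * θ ^ n =
      (x ^ 3 * θ ^ n - 3 * x ^ 2 * θ ^ (n + 1) + 3 * x * θ ^ (n + 2)) - 1 * θ ^ (n + 3) := by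
    intro θ _; ring
  rw [intervalIntegral.integral_congr h,
    intervalIntegral.integral_sub (((intpow _ _ _).sub (intpow _ _ _)).add (intpow _ _ _)) (intpow _ _ _),
    intervalIntegral.integral_add ((intpow _ _ _).sub (intpow _ _ _)) (intpow _ _ _),
    intervalIntegral.integral_sub (intpow _ _ _) (intpow _ _ _)]
  simp [intervalIntegral.integral_const_mul, integral_pow]
  ring

theorem discriminant_single_conv_elliptic (x y : ℝ) (hx : 0 ≤ x) :
    (∫ θ in (0:ℝ)..x, (x - θ) ^ 3 * (θ ^ 3 * y ^ 4)) ^ 2 -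
        (∫ θ in (0:ℝ)..x, (x - θ) ^ 3 * (θ ^ 2 * y ^ 3)) *
          (∫ θ in (0:ℝ)..x, (x - θ) ^ 3 * (θ ^ 4 * y ^ 5)) =
      -(1 / 117600) * x ^ 14 * y ^ 8 ∧
    (x ≠ 0 → y ≠ 0 →
      (∫ θ in (0:ℝ)..x, (x - θ) ^ 3 * (θ ^ 3 * y ^ 4)) ^ 2 -
          (∫ θ in (0:ℝ)..x, (x - θ) ^ 3 * (θ ^ 2 * y ^ 3)) *
            (∫ θ in (0:ℝ)..x, (x - θ) ^ 3 * (θ ^ 4 * y ^ 5)) < 0) := by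
  have e1 : (∫ θ in (0:ℝ)..x, (x - θ) ^ 3 * (θ ^ 3 * y ^ 4)) = y ^ 4 * (x ^ 7 / 140) := by
    have h : ∀ θ ∈ Set.uIcc (0:ℝ) x, (x - θ) ^ 3 * (θ ^ 3 * y ^ 4) = y ^ 4 * ((x - θ) ^ 3 * θ ^ 3) :=
      fun θ _ => by ring
    rw [intervalIntegral.integral_congr h, intervalIntegral.integral_const_mul, key]
    push_cast
    ring
  have e2 : (∫ θ in (0:ℝ)..x, (x - θ) ^ 3 * (θ ^ 2 * y ^ 3)) = y ^ 3 * (x ^ 6 / 60) := by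
    have h : ∀ θ ∈ Set.uIcc (0:ℝ) x, (x - θ) ^ 3 * (θ ^ 2 * y ^ 3) = y ^ 3 * ((x - θ) ^ 3 * θ ^ 2) :=
      fun θ _ => by ring
    rw [intervalIntegral.integral_congr h, intervalIntegral.integral_const_mul, key]
    push_cast
    ring
  have e3 : (∫ θ in (0:ℝ)..x, (x - θ) ^ 3 * (θ ^ 4 * y ^ 5)) = y ^ 5 * (x ^ 8 / 280) := by
    have h : ∀ θ ∈ Set.uIcc (0:ℝ) x, (x - θ) ^ 3 * (θ ^ 4 * y ^ 5) = y ^ 5 * ((x - θ) ^ 3 * θ ^ 4) :=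
      fun θ _ => by ring
    rw [intervalIntegral.integral_congr h, intervalIntegral.integral_const_mul, key]
    push_cast
    ring
  rw [e1, e2, e3]
  constructor
  · ring
  · intro hx0 hy0
    have hx14 : 0 < x ^ 14 := by positivity
    have hy8 : 0 < y ^ 8 := by positivity
    nlinarith [mul_pos hx14 hy8]
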